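/- arXiv:2504.21783 — 3 statements merged into one kernel-verified Lean document; each statement's English description precedes it below -/
import Mathlib

section
/- Let C₀, E₀, C₁, E₁, C₂, E₂, ω₁, ω₂ be positive reals; set δ₀ = C₀/E₀, δ₁ = C₁/E₁, δ₂ = C₂/E₂, δ = δ₀δ₁δ₂, and ξ = (1/E₁)(1 + C₁/E₀ + C₀C₁/(E₀E₂)). Define (with ε = 1 and angles taken in ℝ, i.e. working with real lifts of the angular coordinates) the maps Π₁(r₁, φ₁, φ₂) = ((1−r₁)^{δ₁}, φ₁ − (ω₁/E₁)ln(1−r₁), φ₂ − (ω₂/E₁)ln(1−r₁)) for 0 ≤ r₁ < 1; Π₀(r₂, φ₁, φ₂) = (r₂^{δ₀}, φ₁ − (ω₁/E₀)ln r₂, φ₂ − (ω₂/E₀)ln r₂) for 0 < r₂ ≤ 1; and Π₂(r₁, φ₁, φ₂) = (1 − r₁^{δ₂}, φ₁ − (ω₁/E₂)ln r₁, φ₂ − (ω₂/E₂)ln r₁) for 0 < r₁ ≤ 1. Then for every r₁ ∈ [0,1) and φ₁, φ₂ ∈ ℝ, the composition Π₂∘Π₀∘Π₁ applied to (r₁,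 φ₁, φ₂) yields the point with radial coordinate 1 − (1−r₁)^{δ} and angular coordinates φ₁ − ξω₁·ln(1−r₁) and φ₂ − ξω₂·ln(1−r₁). -/
/-! Along `Π₁`, `Π₀`, `Π₂` the logarithm of the radial coordinate entering each map is
`L = log (1 - r₁)`, then `δ₁ L`, then `δ₀ δ₁ L`, so the radial exponents multiply to `δ` and the
angular shifts add up to `-(1/E₁ + δ₁/E₀ + δ₀δ₁/E₂) ω L = -ξ ω L`. -/

lemma Real.rpow_rpow_rpow {x : ℝ} (hx : 0 ≤ x) (a b c : ℝ) :
    ((x ^ a) ^ b) ^ c = x ^ (a * b * c) := by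
  rw [← Real.rpow_mul hx, ← Real.rpow_mul hx]

lemma Real.log_rpow_rpow {x : ℝ} (hx : 0 < x) (a b : ℝ) :
    Real.log ((x ^ a) ^ b) = b * (a * Real.log x) := by
  rw [Real.log_rpow (Real.rpow_pos_of_pos hx a), Real.log_rpow hx]

theorem stmt_5_general (C₀ E₀ C₁ E₁ E₂ ω₁ ω₂ : ℝ)
    (δ₀ δ₁ δ₂ δ ξ : ℝ)
    (hδ₀ : δ₀ = C₀ / E₀) (hδ₁ : δ₁ = C₁ / E₁)
    (hδ : δ = δ₀ * δ₁ * δ₂)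
    (hξ : ξ = (1 / E₁) * (1 + C₁ / E₀ + C₀ * C₁ / (E₀ * E₂)))
    (Pi₁ Pi₀ Pi₂ : ℝ × ℝ × ℝ → ℝ × ℝ × ℝ)
    (hPi₁ : ∀ r₁ φ₁ φ₂ : ℝ, Pi₁ (r₁, φ₁, φ₂) =
      ((1 - r₁) ^ δ₁,
       φ₁ - (ω₁ / E₁) * Real.log (1 - r₁),
       φ₂ - (ω₂ / E₁) * Real.log (1 - r₁)))
    (hPi₀ : ∀ r₂ φ₁ φ₂ : ℝ, Pi₀ (r₂, φ₁, φ₂) =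
      (r₂ ^ δ₀,
       φ₁ - (ω₁ / E₀) * Real.log r₂,
       φ₂ - (ω₂ / E₀) * Real.log r₂))
    (hPi₂ : ∀ r₁ φ₁ φ₂ : ℝ, Pi₂ (r₁, φ₁, φ₂) =
      (1 - r₁ ^ δ₂,
       φ₁ - (ω₁ / E₂) * Real.log r₁,
       φ₂ - (ω₂ / E₂) * Real.log r₁)) :
    ∀ r₁ ∈ Set.Ico (0 : ℝ) 1, ∀ φ₁ φ₂ : ℝ,
      Pi₂ (Pi₀ (Pi₁ (r₁, φ₁, φ₂))) =
        (1 - (1 - r₁) ^ δ,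
         φ₁ - ξ * ω₁ * Real.log (1 - r₁),
         φ₂ - ξ * ω₂ * Real.log (1 - r₁)) := by
  intro r₁ hr φ₁ φ₂
  have hpos : 0 < 1 - r₁ := sub_pos.mpr hr.2
  have hexp : δ₁ * δ₀ * δ₂ = δ := by rw [hδ]; ring
  rw [hPi₁, hPi₀, hPi₂, Real.rpow_rpow_rpow hpos.le, hexp, Real.log_rpow hpos,
    Real.log_rpow_rpow hpos]
  subst hδ₀ hδ₁ hξ
  ext <;> dsimp only <;> ring

/-- Composition of the three local transition maps (with `ε = 1`, angles in ℝ):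
for `r₁ ∈ [0,1)` and `φ₁, φ₂ ∈ ℝ`, `Pi₂∘Pi₀∘Pi₁` sends `(r₁, φ₁, φ₂)` to the point
with radial coordinate `1 − (1−r₁)^δ` and angular coordinates
`φ₁ − ξω₁ ln(1−r₁)` and `φ₂ − ξω₂ ln(1−r₁)`. -/
theorem stmt_5 (C₀ E₀ C₁ E₁ C₂ E₂ ω₁ ω₂ : ℝ)
    (hC₀ : 0 < C₀) (hE₀ : 0 < E₀) (hC₁ : 0 < C₁) (hE₁ : 0 < E₁)
    (hC₂ : 0 < C₂) (hE₂ : 0 < E₂) (hω₁ : 0 < ω₁) (hω₂ : 0 < ω₂)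
    (δ₀ δ₁ δ₂ δ ξ : ℝ)
    (hδ₀ : δ₀ = C₀ / E₀) (hδ₁ : δ₁ = C₁ / E₁) (hδ₂ : δ₂ = C₂ / E₂)
    (hδ : δ = δ₀ * δ₁ * δ₂)
    (hξ : ξ = (1 / E₁) * (1 + C₁ / E₀ + C₀ * C₁ / (E₀ * E₂)))
    (Pi₁ Pi₀ Pi₂ : ℝ × ℝ × ℝ → ℝ × ℝ × ℝ)
    (hPi₁ : ∀ r₁ φ₁ φ₂ : ℝ, Pi₁ (r₁, φ₁, φ₂) =
      ((1 - r₁) ^ δ₁,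
       φ₁ - (ω₁ / E₁) * Real.log (1 - r₁),
       φ₂ - (ω₂ / E₁) * Real.log (1 - r₁)))
    (hPi₀ : ∀ r₂ φ₁ φ₂ : ℝ, Pi₀ (r₂, φ₁, φ₂) =
      (r₂ ^ δ₀,
       φ₁ - (ω₁ / E₀) * Real.log r₂,
       φ₂ - (ω₂ / E₀) * Real.log r₂))
    (hPi₂ : ∀ r₁ φ₁ φ₂ : ℝ, Pi₂ (r₁, φ₁, φ₂) =
      (1 - r₁ ^ δ₂,
       φ₁ - (ω₁ / E₂) * Real.log r₁,
       φ₂ - (ω₂ / E₂) * Real.log r₁)) :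
    ∀ r₁ ∈ Set.Ico (0 : ℝ) 1, ∀ φ₁ φ₂ : ℝ,
      Pi₂ (Pi₀ (Pi₁ (r₁, φ₁, φ₂))) =
        (1 - (1 - r₁) ^ δ,
         φ₁ - ξ * ω₁ * Real.log (1 - r₁),
         φ₂ - ξ * ω₂ * Real.log (1 - r₁)) :=
  stmt_5_general C₀ E₀ C₁ E₁ E₂ ω₁ ω₂ δ₀ δ₁ δ₂ δ ξ hδ₀ hδ₁ hδ hξ Pi₁ Pi₀ Pi₂ hPi₁ hPi₀ hPi₂
end

section
/- Let δ, ξ, ω₁, ω₂ > 0 and let Ξ : ℝ² → ℝ be a C¹ map which is constant on the unit circle. Define M(s) = 1 − (1−s)^{1/δ}, W(s,φ) = φ + (ξω₂/δ)ln(1−s), u(s,φ) = M(s)cos W(s,φ), v(s,φ) = M(s)sin W(s,φ), and Υ(s,φ) = Ξ(u(s,φ), v(s,φ)) − (ξω₁/δ)·ln(1−s) for s ∈ [0,1), φ ∈ ℝ. Then for each s ∈ (0,1) and φ ∈ ℝ the partial derivative ∂Υ/∂s exists and can be written as ∂Υ/∂s(s,φ) = (1/(1−s))·[ξω₁/δ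 + R(s,φ)], where R(s,φ) → 0 as s → 1⁻ uniformly in φ; that is, for every η > 0 there exists s₀ ∈ (0,1) such that for all s ∈ (s₀,1) and all φ ∈ ℝ, |(1−s)·∂Υ/∂s(s,φ) − ξω₁/δ| < η. -/
/-!
In polar coordinates the point `(u, v)` has radius `1 - a` with `a = (1 - s) ^ (1 / δ)`, and the
chain rule gives `(1 - s) * ∂Υ/∂s - ξω₁/δ = a / δ * ∂ᵣΞ - ξω₂/δ * ∂_θΞ`. The radial derivative is
bounded near the unit circle, so the first term tends to `0` with `a`. Since `Ξ` is constant on the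
unit circle, `∂_θΞ` vanishes there; being continuous and the circle being compact, it is uniformly
small on a thin annulus around the circle, which makes the second term small uniformly in `φ`.
-/

open Real Filter Topology Set

/-- `angularDeriv Ξ (polarCoord.symm (r, θ))` is the `θ`-derivative of `Ξ (r cos θ, r sin θ)`. -/
noncomputable def angularDeriv (Ξ : ℝ × ℝ → ℝ) (p : ℝ × ℝ) : ℝ := fderiv ℝ Ξ p (-p.2, p.1)

def planeUnitCircle : Set (ℝ × ℝ) := {p | p.1 ^ 2 + p.2 ^ 2 = 1}

theorem norm_polarCoord_symm_le (r θ : ℝ) : ‖polarCoord.symm (r, θ)‖ ≤ |r| := by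
  rw [polarCoord_symm_apply, Prod.norm_def, Real.norm_eq_abs, Real.norm_eq_abs, abs_mul,
    abs_mul]
  exact max_le (mul_le_of_le_one_right (abs_nonneg r) (abs_cos_le_one θ))
    (mul_le_of_le_one_right (abs_nonneg r) (abs_sin_le_one θ))

theorem dist_polarCoord_symm_le (r r' θ : ℝ) :
    dist (polarCoord.symm (r, θ)) (polarCoord.symm (r', θ)) ≤ |r - r'| := by
  simpa [dist_eq_norm, polarCoord_symm_apply, ← sub_mul] using
    norm_polarCoord_symm_le (r - r') θ

theorem polarCoord_symm_one_mem_planeUnitCircle (θ : ℝ) :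
    polarCoord.symm (1, θ) ∈ planeUnitCircle := by
  simp [planeUnitCircle, polarCoord_symm_apply]

theorem exists_polarCoord_symm_eq_of_mem_planeUnitCircle {p : ℝ × ℝ}
    (hp : p ∈ planeUnitCircle) : ∃ θ, polarCoord.symm (1, θ) = p := by
  set z : ℂ := Complex.equivRealProd.symm p
  have hz : ‖z‖ = 1 := by
    rw [Complex.norm_def, Complex.normSq_apply]
    have hp : p.1 ^ 2 + p.2 ^ 2 = 1 := hp
    simpa [z, ← sq] using hp
  refine ⟨Complex.arg z, ?_⟩
  rw [polarCoord_symm_apply, ← hz, Complex.norm_mul_cos_arg, Complex.norm_mul_sin_arg]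
  simp [z]

theorem isCompact_planeUnitCircle : IsCompact planeUnitCircle := by
  refine Metric.isCompact_of_isClosed_isBounded (isClosed_eq (by fun_prop) continuous_const)
    ((Metric.isBounded_closedBall (x := 0) (r := 1)).subset fun p hp => ?_)
  obtain ⟨θ, rfl⟩ := exists_polarCoord_symm_eq_of_mem_planeUnitCircle hp
  simpa using norm_polarCoord_symm_le 1 θ

theorem hasDerivAt_comp_polarCoord_symm {Ξ : ℝ × ℝ → ℝ} {m w : ℝ → ℝ} {m' w' s : ℝ}
    (hΞ : DifferentiableAt ℝ Ξ (polarCoord.symm (m s, w s)))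
    (hm : HasDerivAt m m' s) (hw : HasDerivAt w w' s) :
    HasDerivAt (fun t => Ξ (polarCoord.symm (m t, w t)))
      (m' * fderiv ℝ Ξ (polarCoord.symm (m s, w s)) (cos (w s), sin (w s))
        + w' * angularDeriv Ξ (polarCoord.symm (m s, w s))) s := by
  have hcurve : HasDerivAt (fun t => polarCoord.symm (m t, w t))
      (m' • (cos (w s), sin (w s)) + w' • (-(m s * sin (w s)), m s * cos (w s))) s := by
    show HasDerivAt (fun t => (m t * cos (w t), m t * sin (w t))) _ s
    refine ((hm.mul hw.cos).prodMk (hm.mul hw.sin)).congr_deriv (Prod.ext ?_ ?_) <;>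
      simp only [Prod.fst_add, Prod.snd_add, Prod.smul_fst, Prod.smul_snd, smul_eq_mul] <;> ring
  refine (hΞ.hasFDerivAt.comp_hasDerivAt s hcurve).congr_deriv ?_
  simp only [map_add, map_smul, smul_eq_mul]
  rfl

theorem angularDeriv_eq_zero_of_mem_planeUnitCircle {Ξ : ℝ × ℝ → ℝ} (hΞ : Differentiable ℝ Ξ)
    {c : ℝ} (hconst : ∀ p ∈ planeUnitCircle, Ξ p = c) {p : ℝ × ℝ} (hp : p ∈ planeUnitCircle) :
    angularDeriv Ξ p = 0 := by
  obtain ⟨θ, rfl⟩ := exists_polarCoord_symm_eq_of_mem_planeUnitCircle hp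
  have h := hasDerivAt_comp_polarCoord_symm (hΞ _) (hasDerivAt_const θ 1) (hasDerivAt_id θ)
  have hc : (fun t => Ξ (polarCoord.symm (1, id t))) = fun _ => c :=
    funext fun t => hconst _ (polarCoord_symm_one_mem_planeUnitCircle t)
  rw [hc] at h
  simpa using h.unique (hasDerivAt_const θ c)

theorem IsCompact.exists_pos_forall_norm_lt_of_forall_eq_zero {X E : Type*} [PseudoMetricSpace X]
    [NormedAddCommGroup E] {g : X → E} (hg : Continuous g) {S : Set X} (hS : IsCompact S)
    (hzero : ∀ y ∈ S, g y = 0) {ε : ℝ} (hε : 0 < ε) :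
    ∃ d > 0, ∀ x, ∀ y ∈ S, dist x y < d → ‖g x‖ < ε := by
  obtain ⟨d, hd, hsub⟩ := hS.exists_thickening_subset_open
    (isOpen_lt (continuous_norm.comp hg) continuous_const : IsOpen {x | ‖g x‖ < ε})
    fun y hy => by simp [hzero y hy, hε]
  exact ⟨d, hd, fun x y hy hxy => hsub (Metric.mem_thickening_iff.2 ⟨y, hy, hxy⟩)⟩

theorem eventually_forall_abs_angularDeriv_polarCoord_symm_lt {Ξ : ℝ × ℝ → ℝ}
    (hΞ : ContDiff ℝ 1 Ξ) {c : ℝ} (hconst : ∀ p ∈ planeUnitCircle, Ξ p = c) {ε : ℝ}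
    (hε : 0 < ε) :
    ∀ᶠ r in 𝓝 (1 : ℝ), ∀ θ, |angularDeriv Ξ (polarCoord.symm (r, θ))| < ε := by
  have hcont : Continuous (angularDeriv Ξ) :=
    (hΞ.continuous_fderiv one_ne_zero).clm_apply (continuous_snd.neg.prodMk continuous_fst)
  have hzero : ∀ p ∈ planeUnitCircle, angularDeriv Ξ p = 0 := fun _ =>
    angularDeriv_eq_zero_of_mem_planeUnitCircle (hΞ.differentiable one_ne_zero) hconst
  obtain ⟨d, hd, hsmall⟩ :=
    isCompact_planeUnitCircle.exists_pos_forall_norm_lt_of_forall_eq_zero hcont hzero hε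
  filter_upwards [Metric.ball_mem_nhds 1 hd] with r hr θ
  exact hsmall _ _ (polarCoord_symm_one_mem_planeUnitCircle θ)
    ((dist_polarCoord_symm_le r 1 θ).trans_lt hr)

theorem exists_forall_abs_fderiv_polarCoord_symm_le {Ξ : ℝ × ℝ → ℝ} (hΞ : ContDiff ℝ 1 Ξ)
    (R : ℝ) :
    ∃ K, ∀ r θ, |r| ≤ R → |fderiv ℝ Ξ (polarCoord.symm (r, θ)) (cos θ, sin θ)| ≤ K := by
  obtain ⟨K, hK⟩ := (isCompact_closedBall (0 : ℝ × ℝ) R).exists_bound_of_continuousOn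
    (hΞ.continuous_fderiv one_ne_zero).continuousOn
  refine ⟨K, fun r θ hr => ?_⟩
  have hL := hK _ (mem_closedBall_zero_iff.2 ((norm_polarCoord_symm_le r θ).trans hr))
  have hv : ‖((cos θ, sin θ) : ℝ × ℝ)‖ ≤ 1 := by simpa using norm_polarCoord_symm_le 1 θ
  rw [← Real.norm_eq_abs]
  calc _ ≤ ‖fderiv ℝ Ξ (polarCoord.symm (r, θ))‖ * ‖((cos θ, sin θ) : ℝ × ℝ)‖ :=
        ContinuousLinearMap.le_opNorm _ _
    _ ≤ K * 1 := mul_le_mul hL hv (norm_nonneg _) ((norm_nonneg _).trans hL)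
    _ = K := mul_one K

theorem eventually_forall_abs_radial_sub_angular_lt {Ξ : ℝ × ℝ → ℝ} (hΞ : ContDiff ℝ 1 Ξ)
    {c : ℝ} (hconst : ∀ p ∈ planeUnitCircle, Ξ p = c) (b κ : ℝ) {η : ℝ} (hη : 0 < η) :
    ∀ᶠ a in 𝓝 (0 : ℝ), ∀ θ, |b * a * fderiv ℝ Ξ (polarCoord.symm (1 - a, θ)) (cos θ, sin θ)
      - κ * angularDeriv Ξ (polarCoord.symm (1 - a, θ))| < η := by
  obtain ⟨K, hK⟩ := exists_forall_abs_fderiv_polarCoord_symm_le hΞ 2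
  have hradial : ∀ᶠ a in 𝓝 (0 : ℝ), |b * a| * K < η / 2 := by
    have : Tendsto (fun a : ℝ => |b * a| * K) (𝓝 0) (𝓝 0) :=
      (by fun_prop : Continuous fun a : ℝ => |b * a| * K).tendsto' 0 0 (by simp)
    exact this.eventually_lt_const (half_pos hη)
  have hangular : ∀ᶠ a in 𝓝 (0 : ℝ), ∀ θ,
      |angularDeriv Ξ (polarCoord.symm (1 - a, θ))| < η / 2 / (|κ| + 1) := by
    have : Tendsto (fun a : ℝ => 1 - a) (𝓝 0) (𝓝 1) := by
      simpa using ((continuous_sub_left (1 : ℝ)).tendsto 0)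
    exact this.eventually
      (eventually_forall_abs_angularDeriv_polarCoord_symm_lt hΞ hconst (by positivity))
  filter_upwards [hradial, hangular, Metric.ball_mem_nhds (0 : ℝ) one_pos]
    with a hrad hang ha θ
  have h1a : |1 - a| ≤ 2 := by
    rw [Metric.mem_ball, Real.dist_eq, sub_zero, abs_lt] at ha
    rw [abs_le]; constructor <;> linarith
  have hκ : |κ| * |angularDeriv Ξ (polarCoord.symm (1 - a, θ))| < η / 2 := by
    calc _ ≤ (|κ| + 1) * |angularDeriv Ξ (polarCoord.symm (1 - a, θ))| := by
          gcongr; linarith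
      _ < (|κ| + 1) * (η / 2 / (|κ| + 1)) := by gcongr; exact hang θ
      _ = η / 2 := mul_div_cancel₀ _ (by positivity)
  calc _ ≤ |b * a| * |fderiv ℝ Ξ (polarCoord.symm (1 - a, θ)) (cos θ, sin θ)|
        + |κ| * |angularDeriv Ξ (polarCoord.symm (1 - a, θ))| := by
        rw [← abs_mul, ← abs_mul]; exact abs_sub _ _
    _ < η / 2 + η / 2 := by
        have := mul_le_mul_of_nonneg_left (hK (1 - a) θ h1a) (abs_nonneg (b * a))
        linarith
    _ = η := add_halves η

theorem hasDerivAt_spiral_comp_sub_log {Ξ : ℝ × ℝ → ℝ} (hΞ : Differentiable ℝ Ξ)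
    (p κ κ₁ φ : ℝ) {s : ℝ} (hs : s < 1) :
    HasDerivAt
      (fun t => Ξ (polarCoord.symm (1 - (1 - t) ^ p, φ + κ * log (1 - t))) - κ₁ * log (1 - t))
      ((1 - s)⁻¹ * (κ₁ + (p * (1 - s) ^ p
          * fderiv ℝ Ξ (polarCoord.symm (1 - (1 - s) ^ p, φ + κ * log (1 - s)))
            (cos (φ + κ * log (1 - s)), sin (φ + κ * log (1 - s)))
        - κ * angularDeriv Ξ (polarCoord.symm (1 - (1 - s) ^ p, φ + κ * log (1 - s)))))) s := by
  have hne : 1 - s ≠ 0 := sub_ne_zero.2 hs.ne'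
  have h1 : HasDerivAt (fun t => 1 - t) (-1) s := (hasDerivAt_id s).const_sub 1
  have hlog := h1.log hne
  have hm := (h1.rpow_const (p := p) (Or.inl hne)).const_sub 1
  have hw := (hlog.const_mul κ).const_add φ
  refine ((hasDerivAt_comp_polarCoord_symm (hΞ _) hm hw).sub
    (hlog.const_mul κ₁)).congr_deriv ?_
  rw [rpow_sub_one hne]
  field_simp
  ring

theorem exists_mem_Ioo_forall_of_eventually_nhdsLT {a b : ℝ} (hab : a < b) {P : ℝ → Prop}
    (h : ∀ᶠ s in 𝓝[<] b, P s) : ∃ s₀ ∈ Ioo a b, ∀ s ∈ Ioo s₀ b, P s := by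
  obtain ⟨l, hl, hsub⟩ := (mem_nhdsLT_iff_exists_mem_Ico_Ioo_subset hab).1 h
  obtain ⟨m, hlm, hmb⟩ := exists_between hl.2
  exact ⟨m, ⟨hl.1.trans_lt hlm, hmb⟩, fun s hs => hsub ⟨hlm.trans hs.1, hs.2⟩⟩

theorem stmt_9_general (δ ξ ω₁ ω₂ : ℝ) (hδ : 0 < δ)
    (Ξ : ℝ × ℝ → ℝ) (hΞ : ContDiff ℝ 1 Ξ)
    (c : ℝ) (hconst : ∀ p : ℝ × ℝ, p.1 ^ 2 + p.2 ^ 2 = 1 → Ξ p = c)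
    (M : ℝ → ℝ) (W : ℝ → ℝ → ℝ) (Υ : ℝ → ℝ → ℝ)
    (hM : ∀ s : ℝ, M s = 1 - (1 - s) ^ (1 / δ))
    (hW : ∀ s φ : ℝ, W s φ = φ + (ξ * ω₂ / δ) * Real.log (1 - s))
    (hΥ : ∀ s φ : ℝ, Υ s φ =
      Ξ (M s * Real.cos (W s φ), M s * Real.sin (W s φ))
        - (ξ * ω₁ / δ) * Real.log (1 - s)) :
    (∀ s ∈ Set.Ioo (0 : ℝ) 1, ∀ φ : ℝ, DifferentiableAt ℝ (fun s' => Υ s' φ) s) ∧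
    (∀ η > (0 : ℝ), ∃ s₀ ∈ Set.Ioo (0 : ℝ) 1, ∀ s ∈ Set.Ioo s₀ 1, ∀ φ : ℝ,
      |(1 - s) * deriv (fun s' => Υ s' φ) s - ξ * ω₁ / δ| < η) := by
  have hΥ_eq : ∀ φ, (fun s => Υ s φ) = fun s => Ξ (polarCoord.symm
      (1 - (1 - s) ^ (1 / δ), φ + ξ * ω₂ / δ * log (1 - s))) - ξ * ω₁ / δ * log (1 - s) :=
    fun φ => funext fun s => by rw [hΥ, hM, hW]; rfl
  have hderiv := fun φ s (hs : s < 1) => hΥ_eq φ ▸ hasDerivAt_spiral_comp_sub_log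
    (hΞ.differentiable one_ne_zero) (1 / δ) (ξ * ω₂ / δ) (ξ * ω₁ / δ) φ hs
  refine ⟨fun s hs φ => (hderiv φ s hs.2).differentiableAt, fun η hη => ?_⟩
  have ha : Tendsto (fun s : ℝ => (1 - s) ^ (1 / δ)) (𝓝[<] 1) (𝓝 0) := by
    have := ((continuous_sub_left (1 : ℝ)).rpow_const (p := 1 / δ) fun _ =>
      Or.inr (by positivity)).tendsto 1
    rw [sub_self, zero_rpow (by positivity)] at this
    exact this.mono_left nhdsWithin_le_nhds
  obtain ⟨s₀, hs₀, hsmall⟩ := exists_mem_Ioo_forall_of_eventually_nhdsLT zero_lt_one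
    (ha.eventually (eventually_forall_abs_radial_sub_angular_lt hΞ hconst _ _ hη))
  refine ⟨s₀, hs₀, fun s hs φ => ?_⟩
  rw [(hderiv φ s hs.2).deriv, ← mul_assoc, mul_inv_cancel₀ (sub_ne_zero.2 hs.2.ne'), one_mul,
    add_sub_cancel_left]
  exact hsmall s hs _

/-- Claim 1 of Proposition 5.5: the partial derivative `∂Υ/∂s` exists on `(0,1)` and
`(1−s)·∂Υ/∂s(s,φ) → ξω₁/δ` as `s → 1⁻`, uniformly in `φ`; i.e. writing
`∂Υ/∂s = (1/(1−s))·[ξω₁/δ + R(s,φ)]`, the remainder `R(s,φ) → 0` uniformly in `φ`. -/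
theorem stmt_9 (δ ξ ω₁ ω₂ : ℝ) (hδ : 0 < δ) (hξ : 0 < ξ) (hω₁ : 0 < ω₁) (hω₂ : 0 < ω₂)
    (Ξ : ℝ × ℝ → ℝ) (hΞ : ContDiff ℝ 1 Ξ)
    (c : ℝ) (hconst : ∀ p : ℝ × ℝ, p.1 ^ 2 + p.2 ^ 2 = 1 → Ξ p = c)
    (M : ℝ → ℝ) (W : ℝ → ℝ → ℝ) (Υ : ℝ → ℝ → ℝ)
    (hM : ∀ s : ℝ, M s = 1 - (1 - s) ^ (1 / δ))
    (hW : ∀ s φ : ℝ, W s φ = φ + (ξ * ω₂ / δ) * Real.log (1 - s))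
    (hΥ : ∀ s φ : ℝ, Υ s φ =
      Ξ (M s * Real.cos (W s φ), M s * Real.sin (W s φ))
        - (ξ * ω₁ / δ) * Real.log (1 - s)) :
    (∀ s ∈ Set.Ioo (0 : ℝ) 1, ∀ φ : ℝ, DifferentiableAt ℝ (fun s' => Υ s' φ) s) ∧
    (∀ η > (0 : ℝ), ∃ s₀ ∈ Set.Ioo (0 : ℝ) 1, ∀ s ∈ Set.Ioo s₀ 1, ∀ φ : ℝ,
      |(1 - s) * deriv (fun s' => Υ s' φ) s - ξ * ω₁ / δ| < η) :=
  stmt_9_general δ ξ ω₁ ω₂ hδ Ξ hΞ c hconst M W Υ hM hW hΥ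
end

section
/- Let δ, ξ, ω₁, ω₂ > 0 and let Ξ : ℝ² → ℝ be a C¹ map which is constant on the unit circle. Define Υ(s,φ) = Ξ(M(s)cos W(s,φ), M(s)sin W(s,φ)) − (ξω₁/δ)·ln(1−s) with M(s) = 1 − (1−s)^{1/δ} and W(s,φ) = φ + (ξω₂/δ)ln(1−s), and h(s,φ) = 1 − exp(−(δ/(ξω₁))·Υ(s,φ)) for s ∈ [0,1), φ ∈ ℝ. Then there exists s₀ ∈ (0,1) such that the map η(φ₁, s, φ₂) = (φ₂, h(s,φ₂), φ₁) is injective on ℝ × (s₀,1) × ℝ. -/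
/-!
The substitution `σ = -log (1 - s) / δ`, increasing in `s`, turns `Υ(s, φ)` into
`Ξ(R cos θ, R sin θ) + ξω₁ σ` with `R = 1 - e^{-σ}` and `θ = φ - ξω₂ σ`, whose `σ`-derivative is
`ξω₁ + e^{-σ} ∂ᵣΞ - R ξω₂ ∂_θΞ`, with `∂ᵣ`, `∂_θ` the derivatives along the unit radial and
tangential vectors. `∂ᵣΞ` is bounded on the unit disc, and `∂_θΞ` tends to `0` uniformly as
`R → 1` because `Ξ` is constant on the unit circle and `fderiv ℝ Ξ` is uniformly continuous.
So for `s` close to `1` the derivative is positive, `Υ(·, φ)` and hence `h(·, φ)` are injective,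
and so is `η`.
-/

open Real Set Filter

section Polar

variable {Ξ : ℝ × ℝ → ℝ}

lemma norm_cos_sin_le_one (θ : ℝ) : ‖((cos θ, sin θ) : ℝ × ℝ)‖ ≤ 1 :=
  max_le (by simpa using abs_cos_le_one θ) (by simpa using abs_sin_le_one θ)

lemma norm_neg_sin_cos_le_one (θ : ℝ) : ‖((-sin θ, cos θ) : ℝ × ℝ)‖ ≤ 1 :=
  max_le (by simpa using abs_sin_le_one θ) (by simpa using abs_cos_le_one θ)

lemma hasDerivAt_comp_polar {r θ : ℝ → ℝ} {r' θ' t : ℝ}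
    (hΞ : DifferentiableAt ℝ Ξ (r t * cos (θ t), r t * sin (θ t)))
    (hr : HasDerivAt r r' t) (hθ : HasDerivAt θ θ' t) :
    HasDerivAt (fun t ↦ Ξ (r t * cos (θ t), r t * sin (θ t)))
      (r' * fderiv ℝ Ξ (r t * cos (θ t), r t * sin (θ t)) (cos (θ t), sin (θ t))
        + r t * θ' * fderiv ℝ Ξ (r t * cos (θ t), r t * sin (θ t)) (-sin (θ t), cos (θ t))) t := by
  have hγ := (hr.mul hθ.cos).prodMk (hr.mul hθ.sin)
  refine (hΞ.hasFDerivAt.comp_hasDerivAt t hγ).congr_deriv ?_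
  have hv : ((r' * cos (θ t) + r t * (-sin (θ t) * θ'), r' * sin (θ t) + r t * (cos (θ t) * θ'))
      : ℝ × ℝ) = r' • (cos (θ t), sin (θ t)) + (r t * θ') • (-sin (θ t), cos (θ t)) := by
    simp only [Prod.smul_mk, smul_eq_mul, Prod.mk_add_mk, Prod.mk.injEq]
    constructor <;> ring
  rw [hv, map_add, map_smul, map_smul, smul_eq_mul, smul_eq_mul]

lemma fderiv_apply_tangent_eq_zero_of_const_on_circle {c θ : ℝ}
    (hconst : ∀ p : ℝ × ℝ, p.1 ^ 2 + p.2 ^ 2 = 1 → Ξ p = c)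
    (hΞ : DifferentiableAt ℝ Ξ (cos θ, sin θ)) :
    fderiv ℝ Ξ (cos θ, sin θ) (-sin θ, cos θ) = 0 := by
  have hγ : HasDerivAt (fun t ↦ Ξ (cos t, sin t)) (fderiv ℝ Ξ (cos θ, sin θ) (-sin θ, cos θ)) θ :=
    hΞ.hasFDerivAt.comp_hasDerivAt θ ((hasDerivAt_cos θ).prodMk (hasDerivAt_sin θ))
  have hγc : (fun t ↦ Ξ (cos t, sin t)) = fun _ ↦ c :=
    funext fun t ↦ hconst _ (cos_sq_add_sin_sq t)
  rw [hγc] at hγ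
  exact hγ.unique (hasDerivAt_const θ c)

lemma polar_mem_closedBall {r : ℝ} (θ : ℝ) (hr0 : 0 ≤ r) (hr1 : r ≤ 1) :
    ((r * cos θ, r * sin θ) : ℝ × ℝ) ∈ Metric.closedBall 0 1 := by
  rw [mem_closedBall_zero_iff, ← smul_eq_mul r, ← smul_eq_mul r, ← Prod.smul_mk, norm_smul,
    Real.norm_of_nonneg hr0]
  exact mul_le_one₀ hr1 (norm_nonneg _) (norm_cos_sin_le_one θ)

lemma exists_bound_fderiv_apply_radial (hΞ : ContDiff ℝ 1 Ξ) :
    ∃ L, ∀ r θ : ℝ, 0 ≤ r → r ≤ 1 →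
      |fderiv ℝ Ξ (r * cos θ, r * sin θ) (cos θ, sin θ)| ≤ L := by
  obtain ⟨L, hL⟩ := (isCompact_closedBall (0 : ℝ × ℝ) 1).exists_bound_of_continuousOn
    (hΞ.continuous_fderiv one_ne_zero).continuousOn
  refine ⟨L, fun r θ hr0 hr1 ↦ ?_⟩
  have hLr := hL _ (polar_mem_closedBall θ hr0 hr1)
  calc |fderiv ℝ Ξ (r * cos θ, r * sin θ) (cos θ, sin θ)|
      ≤ L * ‖((cos θ, sin θ) : ℝ × ℝ)‖ := (fderiv ℝ Ξ _).le_of_opNorm_le hLr _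
    _ ≤ L := mul_le_of_le_one_right ((norm_nonneg _).trans hLr) (norm_cos_sin_le_one θ)

lemma exists_abs_fderiv_apply_tangent_le (hΞ : ContDiff ℝ 1 Ξ) {c : ℝ}
    (hconst : ∀ p : ℝ × ℝ, p.1 ^ 2 + p.2 ^ 2 = 1 → Ξ p = c) {ε : ℝ} (hε : 0 < ε) :
    ∃ ρ < 1, ∀ r θ : ℝ, ρ ≤ r → r ≤ 1 →
      |fderiv ℝ Ξ (r * cos θ, r * sin θ) (-sin θ, cos θ)| ≤ ε := by
  obtain ⟨d, hd, hunif⟩ := Metric.uniformContinuousOn_iff_le.1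
    ((isCompact_closedBall (0 : ℝ × ℝ) 1).uniformContinuousOn_of_continuous
      (hΞ.continuous_fderiv one_ne_zero).continuousOn) ε hε
  refine ⟨max 0 (1 - d), max_lt one_pos (by linarith), fun r θ hr hr1 ↦ ?_⟩
  have hr0 : 0 ≤ r := (le_max_left _ _).trans hr
  have hdist : dist ((r * cos θ, r * sin θ) : ℝ × ℝ) (cos θ, sin θ) ≤ d := by
    calc dist ((r * cos θ, r * sin θ) : ℝ × ℝ) (cos θ, sin θ)
        = |r - 1| * ‖((cos θ, sin θ) : ℝ × ℝ)‖ := by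
          rw [dist_eq_norm, ← Real.norm_eq_abs, ← norm_smul, sub_smul, one_smul]; rfl
      _ ≤ 1 - r := by
          rw [abs_of_nonpos (by linarith), neg_sub]
          exact mul_le_of_le_one_right (by linarith) (norm_cos_sin_le_one θ)
      _ ≤ d := by linarith [le_max_right 0 (1 - d)]
  have hclose := hunif _ (polar_mem_closedBall θ hr0 hr1) _
    (by simpa using polar_mem_closedBall θ zero_le_one le_rfl) hdist
  rw [dist_eq_norm] at hclose
  have hzero := fderiv_apply_tangent_eq_zero_of_const_on_circle hconst
    ((hΞ.differentiable one_ne_zero) (cos θ, sin θ))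
  calc |fderiv ℝ Ξ (r * cos θ, r * sin θ) (-sin θ, cos θ)|
      = ‖(fderiv ℝ Ξ (r * cos θ, r * sin θ) - fderiv ℝ Ξ (cos θ, sin θ)) (-sin θ, cos θ)‖ := by
        rw [sub_apply, hzero, sub_zero, Real.norm_eq_abs]
    _ ≤ ε * ‖((-sin θ, cos θ) : ℝ × ℝ)‖ := ContinuousLinearMap.le_of_opNorm_le _ hclose _
    _ ≤ ε := mul_le_of_le_one_right hε.le (norm_neg_sin_cos_le_one θ)

end Polar

/-- `Υ(s, φ)` in the variable `σ = -log (1 - s) / δ`, with `a = ξω₁` and `b = -ξω₂`. -/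
noncomputable def spiralPotential (Ξ : ℝ × ℝ → ℝ) (a b φ σ : ℝ) : ℝ :=
  Ξ ((1 - exp (-σ)) * cos (φ + b * σ), (1 - exp (-σ)) * sin (φ + b * σ)) + a * σ

section Spiral

variable {Ξ : ℝ × ℝ → ℝ}

lemma hasDerivAt_spiralPotential {a b φ : ℝ} (hΞ : Differentiable ℝ Ξ) (σ : ℝ) :
    HasDerivAt (spiralPotential Ξ a b φ)
      (exp (-σ) * fderiv ℝ Ξ ((1 - exp (-σ)) * cos (φ + b * σ), (1 - exp (-σ)) * sin (φ + b * σ))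
          (cos (φ + b * σ), sin (φ + b * σ))
        + (1 - exp (-σ)) * b * fderiv ℝ Ξ
            ((1 - exp (-σ)) * cos (φ + b * σ), (1 - exp (-σ)) * sin (φ + b * σ))
            (-sin (φ + b * σ), cos (φ + b * σ))
        + a) σ := by
  have hr : HasDerivAt (fun σ ↦ 1 - exp (-σ)) (exp (-σ)) σ := by
    simpa using ((hasDerivAt_neg σ).exp).const_sub 1
  have hθ : HasDerivAt (fun σ ↦ φ + b * σ) b σ := by
    simpa using ((hasDerivAt_id σ).const_mul b).const_add φ
  have hlin : HasDerivAt (fun σ ↦ a * σ) a σ := by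
    simpa using (hasDerivAt_id σ).const_mul a
  exact (hasDerivAt_comp_polar (hΞ _) hr hθ).add hlin

lemma exists_strictMonoOn_spiralPotential (hΞ : ContDiff ℝ 1 Ξ) {c : ℝ}
    (hconst : ∀ p : ℝ × ℝ, p.1 ^ 2 + p.2 ^ 2 = 1 → Ξ p = c) {a : ℝ} (ha : 0 < a) (b : ℝ) :
    ∃ T > 0, ∀ φ, StrictMonoOn (spiralPotential Ξ a b φ) (Ioi T) := by
  obtain ⟨L, hL⟩ := exists_bound_fderiv_apply_radial hΞ
  obtain ⟨ρ, hρ1, hρ⟩ := exists_abs_fderiv_apply_tangent_le hΞ hconst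
    (ε := a / (2 * (|b| + 1))) (by positivity)
  have hexp := tendsto_exp_neg_atTop_nhds_zero
  have hexpL : Tendsto (fun σ ↦ exp (-σ) * L) atTop (nhds 0) := by
    simpa using hexp.mul_const L
  obtain ⟨T, hT⟩ := eventually_atTop.1 <| (eventually_gt_atTop 0).and <|
    (hexp.eventually_lt_const (sub_pos.2 hρ1)).and (hexpL.eventually_lt_const (half_pos ha))
  refine ⟨T, (hT T le_rfl).1, fun φ ↦ ?_⟩
  have hΞd := hΞ.differentiable one_ne_zero
  refine strictMonoOn_of_deriv_pos (convex_Ioi T)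
    (fun σ _ ↦ (hasDerivAt_spiralPotential hΞd σ).continuousAt.continuousWithinAt)
    (fun σ hσ ↦ ?_)
  rw [interior_Ioi] at hσ
  obtain ⟨hσ0, hρσ, hLσ⟩ := hT σ hσ.le
  rw [(hasDerivAt_spiralPotential hΞd σ).deriv]
  set R := 1 - exp (-σ)
  set θ := φ + b * σ
  have hexp1 : exp (-σ) < 1 := exp_lt_one_iff.2 (neg_neg_of_pos hσ0)
  have hR0 : 0 ≤ R := by linarith
  have hR1 : R ≤ 1 := by linarith [exp_pos (-σ)]
  have hradial : |exp (-σ) * fderiv ℝ Ξ (R * cos θ, R * sin θ) (cos θ, sin θ)| < a / 2 :=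
    calc |exp (-σ) * fderiv ℝ Ξ (R * cos θ, R * sin θ) (cos θ, sin θ)|
        = exp (-σ) * |fderiv ℝ Ξ (R * cos θ, R * sin θ) (cos θ, sin θ)| := by
          rw [abs_mul, abs_of_pos (exp_pos _)]
      _ ≤ exp (-σ) * L := mul_le_mul_of_nonneg_left (hL R θ hR0 hR1) (exp_pos _).le
      _ < a / 2 := hLσ
  have htangent : |R * b * fderiv ℝ Ξ (R * cos θ, R * sin θ) (-sin θ, cos θ)| < a / 2 :=
    calc |R * b * fderiv ℝ Ξ (R * cos θ, R * sin θ) (-sin θ, cos θ)|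
        = R * |b| * |fderiv ℝ Ξ (R * cos θ, R * sin θ) (-sin θ, cos θ)| := by
          rw [abs_mul, abs_mul, abs_of_nonneg hR0]
      _ ≤ 1 * |b| * (a / (2 * (|b| + 1))) :=
          mul_le_mul (mul_le_mul_of_nonneg_right hR1 (abs_nonneg b))
            (hρ R θ (by linarith) hR1) (abs_nonneg _) (by positivity)
      _ = a / 2 - a / (2 * (|b| + 1)) := by field_simp; ring
      _ < a / 2 := sub_lt_self _ (by positivity)
  linarith [neg_abs_le (exp (-σ) * fderiv ℝ Ξ (R * cos θ, R * sin θ) (cos θ, sin θ)),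
    neg_abs_le (R * b * fderiv ℝ Ξ (R * cos θ, R * sin θ) (-sin θ, cos θ))]

end Spiral

lemma strictMonoOn_neg_log_one_sub_div {δ : ℝ} (hδ : 0 < δ) :
    StrictMonoOn (fun s ↦ -log (1 - s) / δ) (Iio 1) := fun s hs t ht hst ↦
  div_lt_div_of_pos_right
    (neg_lt_neg (log_lt_log (sub_pos.2 ht) (by linarith))) hδ

theorem stmt_12_general (δ ξ ω₁ ω₂ : ℝ) (hδ : 0 < δ) (hξ : 0 < ξ) (hω₁ : 0 < ω₁)
    (Ξ : ℝ × ℝ → ℝ) (hΞ : ContDiff ℝ 1 Ξ)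
    (c : ℝ) (hconst : ∀ p : ℝ × ℝ, p.1 ^ 2 + p.2 ^ 2 = 1 → Ξ p = c)
    (M : ℝ → ℝ) (W : ℝ → ℝ → ℝ) (Υ : ℝ → ℝ → ℝ) (hfun : ℝ → ℝ → ℝ)
    (hM : ∀ s : ℝ, M s = 1 - (1 - s) ^ (1 / δ))
    (hW : ∀ s φ : ℝ, W s φ = φ + (ξ * ω₂ / δ) * Real.log (1 - s))
    (hΥ : ∀ s φ : ℝ, Υ s φ =
      Ξ (M s * Real.cos (W s φ), M s * Real.sin (W s φ))
        - (ξ * ω₁ / δ) * Real.log (1 - s))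
    (hh : ∀ s φ : ℝ, hfun s φ = 1 - Real.exp (-(δ / (ξ * ω₁)) * Υ s φ))
    (η : ℝ × ℝ × ℝ → ℝ × ℝ × ℝ)
    (hη : ∀ φ₁ s φ₂ : ℝ, η (φ₁, s, φ₂) = (φ₂, hfun s φ₂, φ₁)) :
    ∃ s₀ ∈ Set.Ioo (0 : ℝ) 1,
      Set.InjOn η ((Set.univ : Set ℝ) ×ˢ (Set.Ioo s₀ 1 ×ˢ (Set.univ : Set ℝ))) := by
  obtain ⟨T, hT0, hmono⟩ :=
    exists_strictMonoOn_spiralPotential hΞ hconst (mul_pos hξ hω₁) (-(ξ * ω₂))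
  have hΥσ : ∀ s < 1, ∀ φ,
      Υ s φ = spiralPotential Ξ (ξ * ω₁) (-(ξ * ω₂)) φ (-log (1 - s) / δ) := by
    intro s hs φ
    have hradius : log (1 - s) * (1 / δ) = -(-log (1 - s) / δ) := by ring
    have hangle : ξ * ω₂ / δ * log (1 - s) = -(ξ * ω₂) * (-log (1 - s) / δ) := by ring
    rw [hΥ, hM, hW, spiralPotential, rpow_def_of_pos (sub_pos.2 hs), hradius, hangle]
    ring
  have hs₀ : 1 - exp (-(δ * T)) ∈ Ioo (0 : ℝ) 1 :=
    ⟨sub_pos.2 (exp_lt_one_iff.2 (by nlinarith)), sub_lt_self _ (exp_pos _)⟩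
  have hmaps : ∀ s ∈ Ioo (1 - exp (-(δ * T))) 1, T < -log (1 - s) / δ := by
    rintro s ⟨hs₀s, hs1⟩
    rw [lt_div_iff₀ hδ, lt_neg, log_lt_iff_lt_exp (sub_pos.2 hs1), mul_comm]
    linarith
  refine ⟨_, hs₀, ?_⟩
  rintro ⟨φ₁, s, φ₂⟩ ⟨-, hs, -⟩ ⟨φ₁', s', φ₂'⟩ ⟨-, hs', -⟩ hηeq
  rw [hη, hη, Prod.mk.injEq, Prod.mk.injEq] at hηeq
  obtain ⟨rfl, hhs, rfl⟩ := hηeq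
  have hne : -(δ / (ξ * ω₁)) ≠ 0 := neg_ne_zero.2 (by positivity)
  rw [hh, hh, sub_right_inj, exp_eq_exp, mul_right_inj' hne, hΥσ s hs.2, hΥσ s' hs'.2] at hhs
  have hσ := (hmono φ₂).injOn (hmaps s hs) (hmaps s' hs') hhs
  obtain rfl : s = s' := (strictMonoOn_neg_log_one_sub_div hδ).injOn hs.2 hs'.2 hσ
  rfl

/-- Claim 3 of Proposition 5.5: with `h(s,φ) = 1 − exp(−(δ/(ξω₁))Υ(s,φ))`,
there is `s₀ ∈ (0,1)` such that the map `η(φ₁, s, φ₂) = (φ₂, h(s,φ₂), φ₁)` is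
injective on `ℝ × (s₀,1) × ℝ`. -/
theorem stmt_12 (δ ξ ω₁ ω₂ : ℝ) (hδ : 0 < δ) (hξ : 0 < ξ) (hω₁ : 0 < ω₁) (hω₂ : 0 < ω₂)
    (Ξ : ℝ × ℝ → ℝ) (hΞ : ContDiff ℝ 1 Ξ)
    (c : ℝ) (hconst : ∀ p : ℝ × ℝ, p.1 ^ 2 + p.2 ^ 2 = 1 → Ξ p = c)
    (M : ℝ → ℝ) (W : ℝ → ℝ → ℝ) (Υ : ℝ → ℝ → ℝ) (hfun : ℝ → ℝ → ℝ)
    (hM : ∀ s : ℝ, M s = 1 - (1 - s) ^ (1 / δ))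
    (hW : ∀ s φ : ℝ, W s φ = φ + (ξ * ω₂ / δ) * Real.log (1 - s))
    (hΥ : ∀ s φ : ℝ, Υ s φ =
      Ξ (M s * Real.cos (W s φ), M s * Real.sin (W s φ))
        - (ξ * ω₁ / δ) * Real.log (1 - s))
    (hh : ∀ s φ : ℝ, hfun s φ = 1 - Real.exp (-(δ / (ξ * ω₁)) * Υ s φ))
    (η : ℝ × ℝ × ℝ → ℝ × ℝ × ℝ)
    (hη : ∀ φ₁ s φ₂ : ℝ, η (φ₁, s, φ₂) = (φ₂, hfun s φ₂, φ₁)) :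
    ∃ s₀ ∈ Set.Ioo (0 : ℝ) 1,
      Set.InjOn η ((Set.univ : Set ℝ) ×ˢ (Set.Ioo s₀ 1 ×ˢ (Set.univ : Set ℝ))) :=
  stmt_12_general δ ξ ω₁ ω₂ hδ hξ hω₁ Ξ hΞ c hconst M W Υ hfun hM hW hΥ hh η hη
end
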